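/- arXiv:1910.06956 — 2 statements merged into one kernel-verified Lean document; each statement's English description precedes it below -/
import Mathlib

section
/- Let w be a standard Gaussian random vector in ℝ^d and let r ≥ √d. Then ∫_{‖w‖ > r} ‖w‖ dG(w) ≤ (r + 2) · exp(-(r - √d)²/2), where G is the standard Gaussian measure on ℝ^d. -/
open MeasureTheory ProbabilityTheory Real Set

-- 1d pieces
lemma gaussianReal_integral_eq (g : ℝ → ℝ) :
    ∫ x, g x ∂(gaussianReal 0 1) = ∫ x, gaussianPDFReal 0 1 x * g x := by
  rw [gaussianReal_of_var_ne_zero 0 one_ne_zero, gaussianPDF_def]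
  rw [show (fun x => ENNReal.ofReal (gaussianPDFReal 0 1 x))
      = (fun x => ((Real.toNNReal (gaussianPDFReal 0 1 x)) : ENNReal)) from rfl]
  rw [integral_withDensity_eq_integral_smul ((measurable_gaussianPDFReal 0 1).real_toNNReal) g]
  congr 1
  funext x
  simp [NNReal.smul_def, Real.coe_toNNReal _ (gaussianPDFReal_nonneg 0 1 x)]

lemma pdf_mul_exp (s x : ℝ) :
    gaussianPDFReal 0 1 x * Real.exp (s * x^2)
      = (Real.sqrt (2*π))⁻¹ * Real.exp (-(1/2 - s) * x^2) := by
  rw [gaussianPDFReal]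
  push_cast
  rw [mul_assoc, ← Real.exp_add]
  ring_nf

lemma integrable_exp_sq_gauss {s : ℝ} (hs : s < 1/2) :
    Integrable (fun x => Real.exp (s * x^2)) (gaussianReal 0 1) := by
  rw [gaussianReal_of_var_ne_zero 0 one_ne_zero, gaussianPDF_def]
  rw [integrable_withDensity_iff (measurable_gaussianPDFReal 0 1).ennreal_ofReal
    (Filter.Eventually.of_forall fun x => ENNReal.ofReal_lt_top)]
  have : (fun x => Real.exp (s * x^2) * (ENNReal.ofReal (gaussianPDFReal 0 1 x)).toReal)
      = fun x => (Real.sqrt (2*π))⁻¹ * Real.exp (-(1/2 - s) * x^2) := by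
    funext x
    rw [ENNReal.toReal_ofReal (gaussianPDFReal_nonneg 0 1 x), mul_comm, pdf_mul_exp]
  rw [this]
  exact (integrable_exp_neg_mul_sq (by linarith)).const_mul _

lemma integral_exp_sq_gauss {s : ℝ} (hs : s < 1/2) :
    ∫ x, Real.exp (s * x^2) ∂(gaussianReal 0 1) = (Real.sqrt (1 - 2*s))⁻¹ := by
  rw [gaussianReal_integral_eq]
  simp_rw [pdf_mul_exp]
  rw [integral_const_mul _ _, integral_gaussian]
  have hb : (0:ℝ) < 1/2 - s := by linarith
  have h1 : Real.sqrt (2*π) = Real.sqrt 2 * Real.sqrt π := Real.sqrt_mul (by norm_num) _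
  have h2 : Real.sqrt (π/(1/2-s)) = Real.sqrt π / Real.sqrt (1/2-s) :=
    Real.sqrt_div Real.pi_pos.le _
  have h3 : Real.sqrt (1-2*s) = Real.sqrt 2 * Real.sqrt (1/2 - s) := by
    rw [show (1-2*s) = 2*(1/2-s) by ring, Real.sqrt_mul (by norm_num)]
  have hπ : Real.sqrt π ≠ 0 := ne_of_gt (Real.sqrt_pos.mpr Real.pi_pos)
  have h2' : Real.sqrt 2 ≠ 0 := ne_of_gt (Real.sqrt_pos.mpr (by norm_num))
  have hb' : Real.sqrt (1/2-s) ≠ 0 := ne_of_gt (Real.sqrt_pos.mpr hb)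
  rw [h1, h2, h3]
  field_simp

-- pi product lemmas
lemma integrable_pi_prod {μ : Measure ℝ} [IsProbabilityMeasure μ] {f : ℝ → ℝ}
    (hf : Integrable f μ) (n : ℕ) :
    Integrable (fun x : Fin n → ℝ => ∏ i, f (x i)) (Measure.pi fun _ => μ) := by
  induction n with
  | zero =>
    simp only [Finset.univ_eq_empty, Finset.prod_empty]
    exact integrable_const 1
  | succ n ih =>
    have h := ((measurePreserving_piFinSuccAbove (fun _ : Fin (n+1) => μ) 0).symm)
    rw [← h.integrable_comp_emb (MeasurableEquiv.measurableEmbedding _)]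
    simp_rw [MeasurableEquiv.piFinSuccAbove_symm_apply, Fin.insertNthEquiv,
      Fin.prod_univ_succ, Fin.insertNth_zero]
    simp only [Fin.zero_succAbove, Function.comp_def, Fin.cons_zero, Fin.cons_succ,
      Equiv.coe_fn_mk, Nat.cast_id, cast_eq]
    exact Integrable.mul_prod hf ih

lemma integral_pi_pow {μ : Measure ℝ} [IsProbabilityMeasure μ] (f : ℝ → ℝ) (n : ℕ) :
    ∫ x : Fin n → ℝ, ∏ i, f (x i) ∂(Measure.pi fun _ => μ) = (∫ x, f x ∂μ) ^ n := by
  induction n with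
  | zero => simp
  | succ n ih =>
    rw [← ((measurePreserving_piFinSuccAbove (fun _ : Fin (n+1) => μ) 0).symm).integral_comp']
    simp only [MeasurableEquiv.piFinSuccAbove_symm_apply, Fin.insertNthEquiv,
      Fin.prod_univ_succ, Fin.insertNth_zero, Equiv.coe_fn_mk, Fin.zero_succAbove,
      Fin.cons_zero, Fin.cons_succ, Nat.cast_id, cast_eq]
    rw [integral_prod_mul f (fun y : Fin n → ℝ => ∏ i, f (y i)), ih, pow_succ, mul_comm]

noncomputable def stdGaussian (d : ℕ) : Measure (EuclideanSpace ℝ (Fin d)) :=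
  (Measure.pi fun _ : Fin d => gaussianReal 0 1).map
    (MeasurableEquiv.toLp 2 (Fin d → ℝ))

instance stdGaussian_prob (d : ℕ) : IsProbabilityMeasure (stdGaussian d) :=
  Measure.isProbabilityMeasure_map (MeasurableEquiv.measurable _).aemeasurable

lemma norm_symm_eq (d : ℕ) (x : Fin d → ℝ) :
    ‖(MeasurableEquiv.toLp 2 (Fin d → ℝ)) x‖ = Real.sqrt (∑ i, (x i)^2) := by
  rw [EuclideanSpace.norm_eq]
  congr 1
  refine Finset.sum_congr rfl fun i _ => ?_
  rw [Real.norm_eq_abs, sq_abs]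
  rfl

lemma integral_stdGaussian (d : ℕ) (F : EuclideanSpace ℝ (Fin d) → ℝ) :
    ∫ w, F w ∂(stdGaussian d)
      = ∫ x, F ((MeasurableEquiv.toLp 2 (Fin d → ℝ)) x)
          ∂(Measure.pi fun _ : Fin d => gaussianReal 0 1) :=
  integral_map_equiv _ _

lemma integrable_stdGaussian_iff (d : ℕ) (F : EuclideanSpace ℝ (Fin d) → ℝ) :
    Integrable F (stdGaussian d)
      ↔ Integrable (fun x => F ((MeasurableEquiv.toLp 2 (Fin d → ℝ)) x))
          (Measure.pi fun _ : Fin d => gaussianReal 0 1) :=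
  (integrable_map_equiv _ _)

lemma integrable_exp_norm_sq (d : ℕ) {s : ℝ} (hs : s < 1/2) :
    Integrable (fun w : EuclideanSpace ℝ (Fin d) => Real.exp (s * ‖w‖^2)) (stdGaussian d) := by
  rw [integrable_stdGaussian_iff]
  have : (fun x : Fin d → ℝ =>
      Real.exp (s * ‖(MeasurableEquiv.toLp 2 (Fin d → ℝ)) x‖^2))
      = fun x => ∏ i, Real.exp (s * (x i)^2) := by
    funext x
    rw [norm_symm_eq, Real.sq_sqrt (Finset.sum_nonneg fun i _ => sq_nonneg _), ← Real.exp_sum,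
      ← Finset.mul_sum]
  rw [this]
  exact integrable_pi_prod (integrable_exp_sq_gauss hs) d

lemma integral_exp_norm_sq (d : ℕ) {s : ℝ} (hs : s < 1/2) :
    ∫ w, Real.exp (s * ‖w‖^2) ∂(stdGaussian d) = ((Real.sqrt (1 - 2*s))⁻¹) ^ d := by
  rw [integral_stdGaussian]
  have : (fun x : Fin d → ℝ =>
      Real.exp (s * ‖(MeasurableEquiv.toLp 2 (Fin d → ℝ)) x‖^2))
      = fun x => ∏ i, Real.exp (s * (x i)^2) := by
    funext x
    rw [norm_symm_eq, Real.sq_sqrt (Finset.sum_nonneg fun i _ => sq_nonneg _), ← Real.exp_sum,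
      ← Finset.mul_sum]
  rw [this, integral_pi_pow (fun x => Real.exp (s * x^2)) d, integral_exp_sq_gauss hs]

lemma tail_bound (d : ℕ) {t : ℝ} (ht : Real.sqrt d ≤ t) :
    ((stdGaussian d) {w | t < ‖w‖}).toReal ≤ Real.exp (-(t - Real.sqrt d)^2 / 2) := by
  have hA : MeasurableSet {w : EuclideanSpace ℝ (Fin d) | t < ‖w‖} :=
    measurableSet_lt measurable_const measurable_norm
  rcases Nat.eq_zero_or_pos d with hd | hd
  · subst hd
    have : {w : EuclideanSpace ℝ (Fin 0) | t < ‖w‖} = ∅ := by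
      ext w
      simp only [Set.mem_setOf_eq, Set.mem_empty_iff_false, iff_false, not_lt]
      have : w = 0 := Subsingleton.elim _ _
      rw [this, norm_zero]
      simpa using ht
    rw [this]
    simp [Real.exp_nonneg]
  · have hd0 : (0:ℝ) < d := by exact_mod_cast hd
    have hsd : 0 < Real.sqrt d := Real.sqrt_pos.mpr hd0
    have ht0 : 0 < t := lt_of_lt_of_le hsd ht
    set s : ℝ := (t - Real.sqrt d) / (2*t) with hs_def
    have hs0 : 0 ≤ s := div_nonneg (by linarith) (by linarith)
    have h12 : 1 - 2*s = Real.sqrt d / t := by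
      rw [hs_def]; field_simp; ring
    have h12pos : 0 < Real.sqrt d / t := div_pos hsd ht0
    have hs : s < 1/2 := by nlinarith
    have step1 : ((stdGaussian d) {w | t < ‖w‖}).toReal
        ≤ ∫ w, Real.exp (s * (‖w‖^2 - t^2)) ∂(stdGaussian d) := by
      change (stdGaussian d).real {w | t < ‖w‖} ≤ _
      rw [← integral_indicator_one hA]
      have hInt : Integrable (fun w : EuclideanSpace ℝ (Fin d) =>
          Real.exp (s * (‖w‖^2 - t^2))) (stdGaussian d) := by
        have : (fun w : EuclideanSpace ℝ (Fin d) => Real.exp (s * (‖w‖^2 - t^2)))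
            = fun w => Real.exp (s * ‖w‖^2) * Real.exp (-(s * t^2)) := by
          funext w; rw [← Real.exp_add]; ring_nf
        rw [this]
        exact (integrable_exp_norm_sq d hs).mul_const _
      refine integral_mono ((integrable_const (1:ℝ)).indicator hA) hInt fun w => ?_
      by_cases h : w ∈ {w : EuclideanSpace ℝ (Fin d) | t < ‖w‖}
      · rw [Set.indicator_of_mem h]
        have h : t < ‖w‖ := h
        refine Real.one_le_exp (mul_nonneg hs0 ?_)
        have : t^2 ≤ ‖w‖^2 := by nlinarith
        linarith
      · rw [Set.indicator_of_notMem h]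
        exact (Real.exp_pos _).le
    have step2 : ∫ w, Real.exp (s * (‖w‖^2 - t^2)) ∂(stdGaussian d)
        = Real.exp (-(s * t^2)) * ((Real.sqrt (1 - 2*s))⁻¹) ^ d := by
      have : (fun w : EuclideanSpace ℝ (Fin d) => Real.exp (s * (‖w‖^2 - t^2)))
          = fun w => Real.exp (s * ‖w‖^2) * Real.exp (-(s * t^2)) := by
        funext w; rw [← Real.exp_add]; ring_nf
      rw [this, integral_mul_const, integral_exp_norm_sq d hs, mul_comm]
    have step3 : Real.exp (-(s * t^2)) * ((Real.sqrt (1 - 2*s))⁻¹) ^ d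
        ≤ Real.exp (-(t - Real.sqrt d)^2 / 2) := by
      have hu0 : 0 < t / Real.sqrt d := div_pos ht0 hsd
      have h12pos' : 0 < 1 - 2*s := by rw [h12]; exact h12pos
      have hA2 : (((Real.sqrt (1 - 2*s))⁻¹) ^ d)^2 = (t / Real.sqrt d) ^ d := by
        rw [← pow_mul, mul_comm d 2, pow_mul, inv_pow, Real.sq_sqrt h12pos'.le, h12, inv_div]
      have hBexp : (t / Real.sqrt d) ^ d ≤ Real.exp (Real.sqrt d * (t - Real.sqrt d)) := by
        have h1 : (t / Real.sqrt d) ^ d = Real.exp (d * Real.log (t / Real.sqrt d)) := by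
          rw [Real.exp_nat_mul, Real.exp_log hu0]
        rw [h1]
        apply Real.exp_le_exp.mpr
        have h2 : Real.log (t / Real.sqrt d) ≤ t / Real.sqrt d - 1 :=
          Real.log_le_sub_one_of_pos hu0
        have hdd : (d:ℝ) = Real.sqrt d * Real.sqrt d := (Real.mul_self_sqrt hd0.le).symm
        calc (d:ℝ) * Real.log (t / Real.sqrt d) ≤ d * (t / Real.sqrt d - 1) :=
              mul_le_mul_of_nonneg_left h2 hd0.le
          _ = Real.sqrt d * (t - Real.sqrt d) := by
              have h : Real.sqrt d ^ 2 = (d:ℝ) := Real.sq_sqrt hd0.le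
              field_simp
              linear_combination (Real.sqrt d - t) * h
      have key : ((Real.sqrt (1 - 2*s))⁻¹) ^ d
          ≤ Real.exp (Real.sqrt d * (t - Real.sqrt d) / 2) := by
        apply (abs_le_of_sq_le_sq' ?_ (Real.exp_pos _).le).2
        have hsq : Real.exp (Real.sqrt d * (t - Real.sqrt d) / 2) ^ 2
            = Real.exp (Real.sqrt d * (t - Real.sqrt d)) := by
          rw [sq, ← Real.exp_add, add_halves]
        rw [hsq, hA2]
        exact hBexp
      calc Real.exp (-(s * t^2)) * ((Real.sqrt (1 - 2*s))⁻¹) ^ d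
          ≤ Real.exp (-(s * t^2)) * Real.exp (Real.sqrt d * (t - Real.sqrt d) / 2) :=
            mul_le_mul_of_nonneg_left key (Real.exp_pos _).le
        _ = Real.exp (-(t - Real.sqrt d)^2 / 2) := by
            rw [← Real.exp_add]
            congr 1
            have hst : s * t^2 = (t - Real.sqrt d) * t / 2 := by
              rw [hs_def]; field_simp
            rw [hst]; ring
    exact step1.trans (step2 ▸ step3)

theorem gaussian_norm_tail_integral_le (d : ℕ) (r : ℝ) (hr : Real.sqrt d ≤ r) :
    ∫ w in {w : EuclideanSpace ℝ (Fin d) | r < ‖w‖}, ‖w‖ ∂(stdGaussian d) ≤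
      (r + 2) * Real.exp (-(r - Real.sqrt d)^2 / 2) := by
  set μ := stdGaussian d
  set E := Real.exp (-(r - Real.sqrt d)^2 / 2) with hE_def
  have hE0 : 0 < E := Real.exp_pos _
  have hr0 : 0 ≤ r := le_trans (Real.sqrt_nonneg _) hr
  have hA : MeasurableSet {w : EuclideanSpace ℝ (Fin d) | r < ‖w‖} :=
    measurableSet_lt measurable_const measurable_norm
  have hIntExp : Integrable (fun w : EuclideanSpace ℝ (Fin d) =>
      Real.exp ((1/4) * ‖w‖^2)) μ := integrable_exp_norm_sq d (by norm_num)
  have hIntNorm : Integrable (fun w : EuclideanSpace ℝ (Fin d) => ‖w‖) μ := by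
    refine Integrable.mono' (hIntExp.const_mul 2) measurable_norm.aestronglyMeasurable
      (Filter.Eventually.of_forall fun w => ?_)
    rw [norm_norm]
    have h1 : (1/4) * ‖w‖^2 + 1 ≤ Real.exp ((1/4) * ‖w‖^2) := Real.add_one_le_exp _
    nlinarith [norm_nonneg w, sq_nonneg (‖w‖ - 1)]
  have hIntPos : Integrable (fun w : EuclideanSpace ℝ (Fin d) => max (‖w‖ - r) 0) μ :=
    (hIntNorm.sub (integrable_const r)).pos_part
  have hPosNN : 0 ≤ᵐ[μ] fun w : EuclideanSpace ℝ (Fin d) => max (‖w‖ - r) 0 :=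
    Filter.Eventually.of_forall fun w => le_max_right _ _
  have hP : (μ {w | r < ‖w‖}).toReal ≤ E := tail_bound d hr
  -- tail function bound
  have hbd : ∀ t ∈ Ioi (0:ℝ),
      (μ {w | t < max (‖w‖ - r) 0}).toReal ≤ E * Real.exp (-(1/2) * t^2) := by
    intro t ht
    have ht0 : 0 < t := ht
    have hset : {w : EuclideanSpace ℝ (Fin d) | t < max (‖w‖ - r) 0}
        = {w : EuclideanSpace ℝ (Fin d) | r + t < ‖w‖} := by
      ext w
      simp only [Set.mem_setOf_eq, lt_max_iff]
      constructor
      · rintro (h | h)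
        · linarith
        · linarith
      · intro h; left; linarith
    rw [hset]
    refine le_trans (tail_bound d (by linarith)) ?_
    rw [hE_def, ← Real.exp_add]
    apply Real.exp_le_exp.mpr
    nlinarith [mul_nonneg ht0.le (sub_nonneg.mpr hr)]
  have hmeas : Measurable fun t : ℝ =>
      (μ {w : EuclideanSpace ℝ (Fin d) | t < max (‖w‖ - r) 0}).toReal := by
    apply Measurable.ennreal_toReal
    apply Antitone.measurable
    intro a b hab
    exact measure_mono fun w hw => lt_of_le_of_lt hab hw
  have hInt2 : IntegrableOn (fun t : ℝ => E * Real.exp (-(1/2) * t^2)) (Ioi 0) volume :=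
    ((integrable_exp_neg_mul_sq (by norm_num : (0:ℝ) < 1/2)).const_mul E).integrableOn
  have hInt1 : IntegrableOn (fun t : ℝ =>
      (μ {w : EuclideanSpace ℝ (Fin d) | t < max (‖w‖ - r) 0}).toReal) (Ioi 0) volume := by
    refine Integrable.mono' hInt2 hmeas.aestronglyMeasurable.restrict ?_
    refine (ae_restrict_iff' measurableSet_Ioi).mpr (Filter.Eventually.of_forall fun t ht => ?_)
    rw [Real.norm_eq_abs, abs_of_nonneg ENNReal.toReal_nonneg]
    exact hbd t ht
  have layer : ∫ w, max (‖w‖ - r) 0 ∂μ ≤ 2 * E := by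
    rw [hIntPos.integral_eq_integral_meas_lt hPosNN]
    calc ∫ t in Ioi (0:ℝ), (μ {w | t < max (‖w‖ - r) 0}).toReal
        ≤ ∫ t in Ioi (0:ℝ), E * Real.exp (-(1/2) * t^2) :=
          setIntegral_mono_on hInt1 hInt2 measurableSet_Ioi hbd
      _ = E * (Real.sqrt (π / (1/2)) / 2) := by
          rw [integral_const_mul, integral_gaussian_Ioi]
      _ ≤ 2 * E := by
          have h4 : Real.sqrt (π / (1/2)) ≤ 4 := by
            have : π / (1/2) ≤ 16 := by nlinarith [Real.pi_le_four]
            calc Real.sqrt (π / (1/2)) ≤ Real.sqrt 16 := Real.sqrt_le_sqrt this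
              _ = 4 := by rw [show (16:ℝ) = 4^2 by norm_num, Real.sqrt_sq (by norm_num)]
          nlinarith
  calc ∫ w in {w : EuclideanSpace ℝ (Fin d) | r < ‖w‖}, ‖w‖ ∂μ
      ≤ ∫ w in {w : EuclideanSpace ℝ (Fin d) | r < ‖w‖}, (r + max (‖w‖ - r) 0) ∂μ := by
        refine setIntegral_mono_on hIntNorm.integrableOn
          ((integrable_const r).add hIntPos).integrableOn hA fun w hw => ?_
        have : ‖w‖ - r ≤ max (‖w‖ - r) 0 := le_max_left _ _
        linarith
    _ = r * (μ {w | r < ‖w‖}).toReal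
        + ∫ w in {w : EuclideanSpace ℝ (Fin d) | r < ‖w‖}, max (‖w‖ - r) 0 ∂μ := by
        rw [integral_add (integrable_const r).integrableOn hIntPos.integrableOn,
          setIntegral_const, smul_eq_mul, mul_comm]
        rfl
    _ ≤ r * E + ∫ w, max (‖w‖ - r) 0 ∂μ := by
        have h1 : ∫ w in {w : EuclideanSpace ℝ (Fin d) | r < ‖w‖}, max (‖w‖ - r) 0 ∂μ
            ≤ ∫ w, max (‖w‖ - r) 0 ∂μ := setIntegral_le_integral hIntPos hPosNN
        have h2 : r * (μ {w | r < ‖w‖}).toReal ≤ r * E :=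
          mul_le_mul_of_nonneg_left hP hr0
        linarith
    _ ≤ r * E + 2 * E := by linarith
    _ = (r + 2) * E := by ring
end

section
/- Let T : ℝ^{d+1} → ℝ^{d+1} be measurable with ‖T‖_H² := ∫ ‖T(w̃)‖² dG(w̃) < ∞, where G is the standard Gaussian on ℝ^{d+1}. Define the input-truncated map T_r(w̃) := T(w̃)·1[‖w̃‖ ≤ r] for r > √(d+1), and Φ(x; w̃) = x̃ · 1[⟨w̃, x̃⟩ ≥ 0] with x̃ = (x,1). Then sup_{‖x‖ ≤ 1} | ∫ ⟨T_r(w̃) - T(w̃), Φ(x; w̃)⟩ dG(w̃) | ≤ √2 ‖T‖_H · exp(-(r - √(d+1))²/4). -/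
open MeasureTheory ProbabilityTheory
open scoped RealInnerProductSpace ENNReal NNReal

/-- The augmented vector `x̃ = (x, 1) ∈ ℝ^{d+1}`. -/
noncomputable def augment {d : ℕ} (x : EuclideanSpace ℝ (Fin d)) :
    EuclideanSpace ℝ (Fin (d + 1)) :=
  (WithLp.equiv 2 (Fin (d + 1) → ℝ)).symm
    (Fin.snoc (WithLp.equiv 2 (Fin d → ℝ) x) 1)

/-- The random feature map `Φ(x; w̃) = x̃ · 1[⟨w̃, x̃⟩ ≥ 0]`. -/
noncomputable def featureMap {d : ℕ} (x : EuclideanSpace ℝ (Fin d))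
    (w : EuclideanSpace ℝ (Fin (d + 1))) : EuclideanSpace ℝ (Fin (d + 1)) :=
  if 0 ≤ ⟪w, augment x⟫ then augment x else 0

open Real in
lemma gauss_mgf {lam : ℝ} (hlam : lam < 1/2) :
    Integrable (fun t : ℝ => rexp (lam * t^2)) (gaussianReal 0 1) ∧
    ∫ t, rexp (lam * t^2) ∂(gaussianReal 0 1) = Real.sqrt (1 - 2*lam)⁻¹ := by
  have hb : (0:ℝ) < 1/2 - lam := by linarith
  have hρ : Measurable fun x : ℝ => (gaussianPDFReal 0 1 x).toNNReal :=
    (measurable_gaussianPDFReal 0 1).real_toNNReal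
  have hden : gaussianReal 0 1
      = volume.withDensity fun x => ((gaussianPDFReal 0 1 x).toNNReal : ℝ≥0∞) :=
    gaussianReal_of_var_ne_zero 0 one_ne_zero
  have hfun : (fun x : ℝ => (gaussianPDFReal 0 1 x).toNNReal • rexp (lam * x^2))
      = fun x => (Real.sqrt (2*π))⁻¹ * rexp (-(1/2 - lam) * x^2) := by
    funext x
    rw [NNReal.smul_def, Real.coe_toNNReal _ (gaussianPDFReal_nonneg _ _ _), gaussianPDFReal]
    simp only [NNReal.coe_one, mul_one, sub_zero]
    rw [smul_eq_mul, mul_assoc, ← Real.exp_add]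
    congr 1
    ring
  have hint : Integrable (fun x : ℝ => (Real.sqrt (2*π))⁻¹ * rexp (-(1/2 - lam) * x^2)) volume :=
    (integrable_exp_neg_mul_sq hb).const_mul _
  constructor
  · rw [hden, integrable_withDensity_iff_integrable_smul hρ]
    rw [hfun]; exact hint
  · rw [hden, integral_withDensity_eq_integral_smul hρ, hfun, integral_const_mul,
      integral_gaussian]
    have h2b : 1 - 2*lam = 2*(1/2 - lam) := by ring
    rw [h2b, ← Real.sqrt_inv, ← Real.sqrt_mul (by positivity)]
    congr 1
    have hπ := Real.pi_pos
    rw [mul_inv, mul_inv, div_eq_mul_inv,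
      show 2⁻¹ * π⁻¹ * (π * (1/2 - lam)⁻¹) = (π⁻¹ * π) * (2⁻¹ * (1/2 - lam)⁻¹) by ring,
      inv_mul_cancel₀ (ne_of_gt hπ), one_mul]

open Real in
lemma pi_gauss (n : ℕ) {lam : ℝ} (hlam : lam < 1/2) :
    Integrable (fun y : Fin n → ℝ => rexp (lam * ∑ i, (y i)^2))
      (Measure.pi fun _ : Fin n => gaussianReal 0 1) ∧
    ∫ y, rexp (lam * ∑ i, (y i)^2) ∂(Measure.pi fun _ : Fin n => gaussianReal 0 1)
      = (Real.sqrt (1 - 2*lam)⁻¹)^n := by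
  obtain ⟨hint, hval⟩ := gauss_mgf hlam
  letI : MeasureSpace ℝ := ⟨gaussianReal 0 1⟩
  haveI : SigmaFinite (volume : Measure ℝ) := inferInstanceAs (SigmaFinite (gaussianReal 0 1))
  have hfun : (fun y : Fin n → ℝ => rexp (lam * ∑ i, (y i)^2))
      = fun y => ∏ i, rexp (lam * (y i)^2) := by
    funext y
    rw [Finset.mul_sum, Real.exp_sum]
  have hpi : (Measure.pi fun _ : Fin n => gaussianReal 0 1) = (volume : Measure (Fin n → ℝ)) :=
    (volume_pi).symm
  constructor
  · rw [hfun, hpi]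
    exact Integrable.fintype_prod (f := fun _ : Fin n => fun t : ℝ => rexp (lam * t^2))
      fun _ => hint
  · rw [hfun]
    rw [integral_fintype_prod_eq_pow (ι := Fin n) (fun t : ℝ => rexp (lam * t^2)), Fintype.card_fin]
    exact congrArg (· ^ n) hval

instance stdGaussian_isProbabilityMeasure (n : ℕ) : IsProbabilityMeasure (stdGaussian n) := by
  rw [_root_.stdGaussian]
  exact Measure.isProbabilityMeasure_map (MeasurableEquiv.measurable _).aemeasurable

open Real in
lemma stdGaussian_tail (n : ℕ) (hn : 0 < n) {r : ℝ} (hr : Real.sqrt n < r) :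
    ((stdGaussian n) {w | r < ‖w‖}).toReal ≤ rexp (-(r - Real.sqrt n)^2 / 2) := by
  set s := Real.sqrt (n : ℝ) with hs
  have hn' : (0:ℝ) < n := by exact_mod_cast hn
  have hns : (n:ℝ) = s^2 := (Real.sq_sqrt hn'.le).symm
  have hs1 : 1 ≤ s := by
    rw [hs, show (1:ℝ) = Real.sqrt 1 by simp]
    exact Real.sqrt_le_sqrt (by exact_mod_cast hn)
  have hs0 : (0:ℝ) < s := lt_of_lt_of_le one_pos hs1
  have hr0 : (0:ℝ) < r := lt_trans hs0 hr
  have hrn : (n:ℝ) < r^2 := by nlinarith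
  set lam := (r^2 - n)/(2*r^2) with hlam_def
  have hlam : lam < 1/2 := by
    rw [hlam_def, div_lt_iff₀ (by positivity)]
    nlinarith
  have hlam0 : 0 < lam := div_pos (by linarith) (by positivity)
  have h1m : 1 - 2*lam = n/r^2 := by
    rw [hlam_def]
    field_simp
    ring
  obtain ⟨hint, hval⟩ := pi_gauss n hlam
  have hmeasSet : MeasurableSet {w : EuclideanSpace ℝ (Fin n) | r < ‖w‖} :=
    measurableSet_lt measurable_const continuous_norm.measurable
  have hnorm : ∀ y : Fin n → ℝ,
      ‖(MeasurableEquiv.toLp 2 (Fin n → ℝ)) y‖ = Real.sqrt (∑ i, (y i)^2) := by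
    intro y
    rw [EuclideanSpace.norm_eq]
    congr 1
    refine Finset.sum_congr rfl fun i _ => ?_
    simp [MeasurableEquiv.toLp_apply, PiLp.toLp_apply,
      Real.norm_eq_abs, sq_abs]
  have hmap : stdGaussian n {w | r < ‖w‖}
      = (Measure.pi fun _ : Fin n => gaussianReal 0 1) {y | r^2 < ∑ i, (y i)^2} := by
    rw [_root_.stdGaussian, Measure.map_apply (MeasurableEquiv.measurable _) hmeasSet]
    congr 1
    ext y
    simp only [Set.mem_preimage, Set.mem_setOf_eq]
    rw [hnorm y, Real.lt_sqrt hr0.le]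
  set μpi := (Measure.pi fun _ : Fin n => gaussianReal 0 1) with hμpi
  have hsub : {y : Fin n → ℝ | r^2 < ∑ i, (y i)^2}
      ⊆ {y : Fin n → ℝ | rexp (lam * r^2) ≤ rexp (lam * ∑ i, (y i)^2)} := by
    intro y hy
    simp only [Set.mem_setOf_eq] at hy ⊢
    exact Real.exp_le_exp.mpr (by nlinarith)
  have hmarkov := mul_meas_ge_le_integral_of_nonneg
    (ae_of_all μpi fun y => (Real.exp_pos _).le) hint (rexp (lam * r^2))
  have hmono : (μpi {y | r^2 < ∑ i, (y i)^2}).toReal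
      ≤ (μpi {y | rexp (lam * r^2) ≤ rexp (lam * ∑ i, (y i)^2)}).toReal :=
    ENNReal.toReal_mono (measure_ne_top _ _) (measure_mono hsub)
  have hε : (0:ℝ) < rexp (lam * r^2) := Real.exp_pos _
  have hdiv : (μpi {y | rexp (lam * r^2) ≤ rexp (lam * ∑ i, (y i)^2)}).toReal
      ≤ (Real.sqrt (1 - 2*lam)⁻¹)^n / rexp (lam * r^2) := by
    rw [le_div_iff₀ hε]
    rw [mul_comm]
    rw [← hval]
    exact hmarkov
  have hI : Real.sqrt (1 - 2*lam)⁻¹ = r/s := by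
    rw [h1m, inv_div, Real.sqrt_div' _ hn'.le, Real.sqrt_sq hr0.le, ← hs]
  have hlamr : lam * r^2 = (r^2 - n)/2 := by
    rw [hlam_def]
    field_simp
  have hpow : (r/s)^n ≤ rexp (s*r - n) := by
    have hx : r/s ≤ rexp (r/s - 1) := by
      have := Real.add_one_le_exp (r/s - 1)
      linarith
    have h2 := pow_le_pow_left₀ (le_of_lt (div_pos hr0 hs0)) hx n
    rw [← Real.exp_nat_mul] at h2
    have hcalc : (n:ℝ) * (r/s - 1) = s*r - n := by
      rw [hns]
      field_simp
    rwa [hcalc] at h2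
  have key : (r/s)^n / rexp (lam * r^2) ≤ rexp (-(r - s)^2 / 2) := by
    rw [div_le_iff₀ hε, ← Real.exp_add]
    refine hpow.trans (le_of_eq ?_)
    congr 1
    rw [hlamr, hns]
    ring
  calc (stdGaussian n {w | r < ‖w‖}).toReal
      = (μpi {y | r^2 < ∑ i, (y i)^2}).toReal := by rw [hmap]
    _ ≤ (μpi {y | rexp (lam * r^2) ≤ rexp (lam * ∑ i, (y i)^2)}).toReal := hmono
    _ ≤ (Real.sqrt (1 - 2*lam)⁻¹)^n / rexp (lam * r^2) := hdiv
    _ = (r/s)^n / rexp (lam * r^2) := by rw [hI]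
    _ ≤ rexp (-(r - s)^2 / 2) := key

theorem input_truncated_transport_error (d : ℕ) (r : ℝ)
    (hr : Real.sqrt (d + 1) < r)
    (T : EuclideanSpace ℝ (Fin (d + 1)) → EuclideanSpace ℝ (Fin (d + 1)))
    (hTmeas : Measurable T)
    (H : ℝ)
    (hH : H = ∫ w, ‖T w‖^2 ∂(stdGaussian (d + 1)))
    (hfin : MemLp T 2 (stdGaussian (d + 1))) :
    ∀ x : EuclideanSpace ℝ (Fin d), ‖x‖ ≤ 1 →
      |∫ w, ⟪(if ‖w‖ ≤ r then T w else 0) - T w, featureMap x w⟫ ∂(stdGaussian (d + 1))|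
        ≤ Real.sqrt 2 * Real.sqrt H * Real.exp (-(r - Real.sqrt (d + 1))^2 / 4) := by
  intro x hx
  set μ := stdGaussian (d + 1) with hμ
  set s := Real.sqrt ((d:ℝ) + 1) with hs
  -- the augmented vector has norm at most √2
  have haug : ‖augment x‖ ≤ Real.sqrt 2 := by
    have hxsum : ∑ i, ‖x i‖^2 = ‖x‖^2 := by
      rw [EuclideanSpace.norm_eq, Real.sq_sqrt (by positivity)]
    have hsum : ∑ i : Fin (d+1), ‖augment x i‖^2 ≤ 2 := by
      simp only [augment, WithLp.equiv_symm_apply, PiLp.toLp_apply]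
      rw [Fin.sum_univ_castSucc]
      simp only [Fin.snoc_castSucc, Fin.snoc_last]
      have h1 : ∑ i : Fin d, ‖(WithLp.equiv 2 (Fin d → ℝ) x) i‖^2 = ‖x‖^2 := by
        rw [← hxsum]; rfl
      rw [h1]
      have hx2 : ‖x‖^2 ≤ 1 := by nlinarith [norm_nonneg x]
      simp only [norm_one, one_pow]
      linarith
    calc ‖augment x‖ = Real.sqrt (∑ i, ‖augment x i‖^2) := EuclideanSpace.norm_eq _
      _ ≤ Real.sqrt 2 := Real.sqrt_le_sqrt hsum
  have hfeat : ∀ w, ‖featureMap x w‖ ≤ Real.sqrt 2 := by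
    intro w
    rw [featureMap]
    split
    · exact haug
    · simp [Real.sqrt_nonneg]
  set A := {w : EuclideanSpace ℝ (Fin (d+1)) | r < ‖w‖} with hA
  have hAmeas : MeasurableSet A := measurableSet_lt measurable_const continuous_norm.measurable
  set F := fun w : EuclideanSpace ℝ (Fin (d+1)) => ‖T w‖ with hF
  set G := A.indicator (fun _ : EuclideanSpace ℝ (Fin (d+1)) => (1:ℝ)) with hG
  set g := fun w => Real.sqrt 2 * (F w * G w) with hg
  have hGapp : ∀ w, G w = if r < ‖w‖ then 1 else 0 := by
    intro w
    simp only [hG, Set.indicator_apply, hA, Set.mem_setOf_eq]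
  have hG0all : ∀ w, 0 ≤ G w := by
    intro w; rw [hGapp w]; split_ifs <;> norm_num
  have hG1all : ∀ w, G w ≤ 1 := by
    intro w; rw [hGapp w]; split_ifs <;> norm_num
  -- pointwise bound
  have hpt : ∀ w, |⟪(if ‖w‖ ≤ r then T w else 0) - T w, featureMap x w⟫| ≤ g w := by
    intro w
    by_cases h : ‖w‖ ≤ r
    · simp only [if_pos h, sub_self, inner_zero_left, abs_zero]
      exact mul_nonneg (Real.sqrt_nonneg 2) (mul_nonneg (norm_nonneg _) (hG0all w))
    · have hG1 : G w = 1 := by rw [hGapp w, if_pos (not_le.mp h)]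
      have h0 : |⟪(0 : EuclideanSpace ℝ (Fin (d+1))) - T w, featureMap x w⟫|
          ≤ Real.sqrt 2 * (F w * G w) := by
        rw [hG1, mul_one, zero_sub]
        calc |⟪-T w, featureMap x w⟫|
            ≤ ‖(-T w : EuclideanSpace ℝ (Fin (d+1)))‖ * ‖featureMap x w‖ :=
              abs_real_inner_le_norm _ _
          _ = ‖T w‖ * ‖featureMap x w‖ := by rw [norm_neg]
          _ ≤ ‖T w‖ * Real.sqrt 2 := mul_le_mul_of_nonneg_left (hfeat w) (norm_nonneg _)
          _ = Real.sqrt 2 * F w := by rw [mul_comm]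
      simpa [h] using h0
  -- integrability
  have hFmem : MemLp F 2 μ := hfin.norm
  have hGmem : MemLp G 2 μ := MemLp.indicator hAmeas (memLp_const 1)
  have hFint : Integrable F μ := hFmem.integrable one_le_two
  have hgmeas : AEStronglyMeasurable g μ := by
    refine (Measurable.aestronglyMeasurable ?_)
    exact (((hTmeas.norm).mul ((measurable_const (a := (1:ℝ))).indicator hAmeas)).const_mul _)
  have hgint : Integrable g μ := by
    refine Integrable.mono' (hFint.const_mul (Real.sqrt 2)) hgmeas (ae_of_all _ fun w => ?_)
    have hG0 : 0 ≤ G w := hG0all w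
    have hG1 : G w ≤ 1 := hG1all w
    have hFnn : (0:ℝ) ≤ F w := norm_nonneg _
    rw [hg, Real.norm_eq_abs,
      abs_of_nonneg (mul_nonneg (Real.sqrt_nonneg 2) (mul_nonneg hFnn hG0))]
    have : F w * G w ≤ F w := by nlinarith
    exact mul_le_mul_of_nonneg_left this (Real.sqrt_nonneg 2)
  -- step 1 : |∫ f| ≤ ∫ |f|
  have step1 : |∫ w, ⟪(if ‖w‖ ≤ r then T w else 0) - T w, featureMap x w⟫ ∂μ|
      ≤ ∫ w, |⟪(if ‖w‖ ≤ r then T w else 0) - T w, featureMap x w⟫| ∂μ := by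
    rw [← Real.norm_eq_abs]
    refine (norm_integral_le_integral_norm _).trans (le_of_eq ?_)
    simp [Real.norm_eq_abs]
  have step2 : ∫ w, |⟪(if ‖w‖ ≤ r then T w else 0) - T w, featureMap x w⟫| ∂μ
      ≤ ∫ w, g w ∂μ :=
    integral_mono_of_nonneg (ae_of_all _ fun w => abs_nonneg _) hgint (ae_of_all _ hpt)
  have step3 : ∫ w, g w ∂μ = Real.sqrt 2 * ∫ w, F w * G w ∂μ := by
    simp only [hg]
    exact integral_const_mul _ _
  -- Cauchy-Schwarz
  have hconj : Real.HolderConjugate 2 2 := Real.HolderConjugate.two_two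
  have h2 : ENNReal.ofReal (2:ℝ) = 2 := by simp
  have hFmem' : MemLp F (ENNReal.ofReal (2:ℝ)) μ := by rw [h2]; exact hFmem
  have hGmem' : MemLp G (ENNReal.ofReal (2:ℝ)) μ := by rw [h2]; exact hGmem
  have holder := integral_mul_le_Lp_mul_Lq_of_nonneg hconj
    (ae_of_all _ fun w => norm_nonneg (T w)) (ae_of_all _ hG0all) hFmem' hGmem'
  have hrp : ∀ y : ℝ, y ^ (2:ℝ) = y ^ 2 := fun y => by
    rw [show (2:ℝ) = ((2:ℕ):ℝ) by norm_num, Real.rpow_natCast]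
  simp only [hrp] at holder
  rw [← Real.sqrt_eq_rpow, ← Real.sqrt_eq_rpow] at holder
  have hGsq : ∀ w, G w ^ 2 = G w := by
    intro w; rw [hGapp w]; split_ifs <;> norm_num
  simp only [hGsq] at holder
  have hGint : ∫ w, G w ∂μ = (μ A).toReal := by
    rw [hG]
    exact integral_indicator_one hAmeas
  have hFH : ∫ w, F w ^ 2 ∂μ = H := by
    simp only [hF]
    exact hH.symm
  rw [hGint, hFH] at holder
  -- tail bound
  have hcast : ((d+1 : ℕ):ℝ) = (d:ℝ) + 1 := by push_cast; ring
  have htail : (μ A).toReal ≤ Real.exp (-(r - s)^2/2) := by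
    have h := stdGaussian_tail (d+1) (Nat.succ_pos d) (r := r) (by rw [hcast, ← hs]; exact hr)
    rw [hcast, ← hs] at h
    exact h
  have hsqrtexp : Real.sqrt (Real.exp (-(r-s)^2/2)) = Real.exp (-(r-s)^2/4) := by
    have h := Real.exp_nat_mul (-(r-s)^2/4) 2
    rw [show ((2:ℕ):ℝ) * (-(r-s)^2/4) = -(r-s)^2/2 by push_cast; ring] at h
    rw [h, Real.sqrt_sq (Real.exp_pos _).le]
  have h5 : Real.sqrt ((μ A).toReal) ≤ Real.exp (-(r-s)^2/4) := by
    calc Real.sqrt ((μ A).toReal) ≤ Real.sqrt (Real.exp (-(r-s)^2/2)) :=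
          Real.sqrt_le_sqrt htail
      _ = Real.exp (-(r-s)^2/4) := hsqrtexp
  calc |∫ w, ⟪(if ‖w‖ ≤ r then T w else 0) - T w, featureMap x w⟫ ∂μ|
      ≤ ∫ w, |⟪(if ‖w‖ ≤ r then T w else 0) - T w, featureMap x w⟫| ∂μ := step1
    _ ≤ ∫ w, g w ∂μ := step2
    _ = Real.sqrt 2 * ∫ w, F w * G w ∂μ := step3
    _ ≤ Real.sqrt 2 * (Real.sqrt H * Real.sqrt ((μ A).toReal)) :=
        mul_le_mul_of_nonneg_left holder (Real.sqrt_nonneg 2)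
    _ ≤ Real.sqrt 2 * (Real.sqrt H * Real.exp (-(r-s)^2/4)) :=
        mul_le_mul_of_nonneg_left
          (mul_le_mul_of_nonneg_left h5 (Real.sqrt_nonneg H)) (Real.sqrt_nonneg 2)
    _ = Real.sqrt 2 * Real.sqrt H * Real.exp (-(r-s)^2/4) := (mul_assoc _ _ _).symm
end
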